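/- arXiv:2511.02870 — 11 statements merged into one kernel-verified Lean document; each statement's English description precedes it below -/
import Mathlib

section
/- If f : G → H satisfies (J1) with f(e) = 0, then for all x,y,z ∈ G: f(xyz) - f(xzy) = f(xy⁻¹z⁻¹) - f(xz⁻¹y⁻¹). -/
theorem stmt_3 {G H : Type*} [Group G] [AddCommGroup H] (f : G → H)
    (hJ : ∀ x y : G, f (x * y) + f (x * y⁻¹) = 2 • f x) (he : f 1 = 0) :
    ∀ x y z : G, f (x * y * z) - f (x * z * y)
      = f (x * y⁻¹ * z⁻¹) - f (x * z⁻¹ * y⁻¹) := by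
  intro x y z
  have h1 := hJ x (y * z)
  have h2 := hJ x (z * y)
  simp only [mul_inv_rev, ← mul_assoc] at h1 h2
  have h := h1.trans h2.symm
  rw [sub_eq_sub_iff_add_eq_add]
  rw [h, add_comm]
end

section
/- If f : G → H satisfies (J1) with f(e) = 0 and a,b ∈ G are involutions, then 2f(ab) = 0. -/
theorem stmt_5 {G H : Type*} [Group G] [AddCommGroup H] (f : G → H)
    (hJ : ∀ x y : G, f (x * y) + f (x * y⁻¹) = 2 • f x) (he : f 1 = 0)
    (a b : G) (ha : a ^ 2 = 1) (hb : b ^ 2 = 1) : 2 • f (a * b) = 0 := by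
  have hainv : a⁻¹ = a := by
    rw [inv_eq_iff_mul_eq_one, ← sq, ha]
  have hbinv : b⁻¹ = b := by
    rw [inv_eq_iff_mul_eq_one, ← sq, hb]
  have h1 := hJ 1 a
  rw [one_mul, one_mul, hainv, he] at h1
  have h2 := hJ a b
  rw [hbinv] at h2
  rw [two_smul, h2, two_smul]
  simpa using h1
end

section
/- If f : G → H satisfies (J1) with f(e) = 0, a,b ∈ G are involutions, and t ∈ G satisfies t² = ab, then f(ab) = 2f(t) and 4f(t) = 0. -/
theorem stmt_6 {G H : Type*} [Group G] [AddCommGroup H] (f : G → H)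
    (hJ : ∀ x y : G, f (x * y) + f (x * y⁻¹) = 2 • f x) (he : f 1 = 0)
    (a b t : G) (ha : a ^ 2 = 1) (hb : b ^ 2 = 1) (ht : t ^ 2 = a * b) :
    f (a * b) = 2 • f t ∧ 4 • f t = 0 := by
  have fsq : ∀ x : G, f (x ^ 2) = 2 • f x := by
    intro x
    have h := hJ x x
    rw [mul_inv_cancel, he, add_zero, ← pow_two] at h
    exact h
  have h1 : f (a * b) = 2 • f t := by rw [← ht, fsq]
  have hbinv : b⁻¹ = b := by
    rw [← mul_left_cancel_iff (a := b), mul_inv_cancel, ← pow_two, hb]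
  have hfa : 2 • f a = 0 := by rw [← fsq, ha, he]
  have h2 : 2 • f (a * b) = 0 := by
    have h := hJ a b
    rw [hbinv] at h
    have : f (a * b) + f (a * b) = 2 • f a := h
    rw [hfa] at this
    have h4 : 2 • f (a * b) = f (a * b) + f (a * b) := two_nsmul _
    rw [h4, this]
  refine ⟨h1, ?_⟩
  have : (4 : ℕ) • f t = 2 • (2 • f t) := by rw [← mul_nsmul]
  rw [this, ← h1, h2]
end

section
/- If f : G → H satisfies (J1) with f(e) = 0, and g ∈ G is a product of finitely many involutions, then 2f(g) = 0. -/
/-! Right multiplication by an involution `i` preserves `2 • f`: since `i⁻¹ = i`, (J1) at `(x, i)`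
reads `f (x * i) + f (x * i) = 2 • f x`. Hence so does right multiplication by any product of
involutions `g`, and evaluating at `x = 1` gives `2 • f g = 2 • f 1 = 0`. -/

section JensenEquation

variable {G H : Type*} [Group G] [AddCommGroup H] {f : G → H}

theorem two_nsmul_map_mul_of_sq_eq_one
    (hJ : ∀ x y : G, f (x * y) + f (x * y⁻¹) = 2 • f x) {i : G} (hi : i ^ 2 = 1) (x : G) :
    2 • f (x * i) = 2 • f x := by
  have hinv : i⁻¹ = i := inv_eq_of_mul_eq_one_left (by rwa [← pow_two])
  rw [two_nsmul, ← hJ x i, hinv]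

theorem two_nsmul_map_mul_list_prod
    (hJ : ∀ x y : G, f (x * y) + f (x * y⁻¹) = 2 • f x) {l : List G} (hl : ∀ i ∈ l, i ^ 2 = 1)
    (x : G) : 2 • f (x * l.prod) = 2 • f x := by
  induction l generalizing x with
  | nil => simp
  | cons i t ih =>
    rw [List.prod_cons, ← mul_assoc, ih (fun j hj => hl j (List.mem_cons_of_mem _ hj)),
      two_nsmul_map_mul_of_sq_eq_one hJ (hl i List.mem_cons_self)]

end JensenEquation

theorem stmt_7 {G H : Type*} [Group G] [AddCommGroup H] (f : G → H)
    (hJ : ∀ x y : G, f (x * y) + f (x * y⁻¹) = 2 • f x) (he : f 1 = 0)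
    (l : List G) (hl : ∀ i ∈ l, i ^ 2 = 1) : 2 • f l.prod = 0 := by
  simpa [he] using two_nsmul_map_mul_list_prod hJ hl 1
end

section
/- If G is a group generated by involutions and f : G → H satisfies (J1) with f(e) = 0, then 2f(g) = 0 for all g ∈ G. -/
theorem stmt_8 {G H : Type*} [Group G] [AddCommGroup H] (I : Set G)
    (hI : ∀ i ∈ I, i ^ 2 = 1) (hgen : Subgroup.closure I = ⊤) (f : G → H)
    (hJ : ∀ x y : G, f (x * y) + f (x * y⁻¹) = 2 • f x) (he : f 1 = 0) :
    ∀ g : G, 2 • f g = 0 := by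
  -- f is odd
  have hodd : ∀ y : G, f y⁻¹ = - f y := by
    intro y
    have := hJ 1 y
    simp [he] at this
    linear_combination (norm := abel) this
  have key : ∀ g : G, (∀ x : G, 2 • f (x * g) = 2 • f x + 2 • f g) ∧ 2 • f g = 0 := by
    intro g
    have hg : g ∈ Subgroup.closure I := by rw [hgen]; trivial
    induction hg using Subgroup.closure_induction with
    | mem i hi =>
      have hii : i⁻¹ = i := by
        have := hI i hi
        rw [pow_two] at this
        exact inv_eq_of_mul_eq_one_right this
      have h2 : 2 • f i = 0 := by
        have := hJ i i
        rw [mul_inv_cancel, he] at this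
        have h2' := hI i hi
        rw [pow_two] at h2'
        rw [h2', he] at this
        linear_combination (norm := abel) - this
      refine ⟨fun x => ?_, h2⟩
      have := hJ x i
      rw [hii] at this
      rw [h2, add_zero]
      linear_combination (norm := abel) this
    | one => simp [he]
    | mul a b _ _ ha hb =>
      have hab : 2 • f (a * b) = 0 := by rw [hb.1 a, ha.2, hb.2, add_zero]
      refine ⟨fun x => ?_, hab⟩
      rw [← mul_assoc, hb.1 (x * a), ha.1 x, hab, add_zero, ha.2, add_zero, hb.2, add_zero]
    | inv a _ ha =>
      have hainv : 2 • f a⁻¹ = 0 := by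
        rw [hodd a, smul_neg, ha.2, neg_zero]
      refine ⟨fun x => ?_, hainv⟩
      have h1 := ha.1 (x * a⁻¹)
      rw [inv_mul_cancel_right] at h1
      rw [ha.2, add_zero] at h1
      rw [hainv, add_zero]
      exact h1.symm
  intro g
  exact (key g).2
end

section
/- If G is a group generated by involutions, H an abelian group, and f : G → H satisfies (J1) with f(e) = 0, then f(xyz) = f(xzy) for all x,y,z ∈ G. -/
theorem stmt_9 {G H : Type*} [Group G] [AddCommGroup H] (I : Set G)
    (hI : ∀ i ∈ I, i ^ 2 = 1) (hgen : Subgroup.closure I = ⊤) (f : G → H)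
    (hJ : ∀ x y : G, f (x * y) + f (x * y⁻¹) = 2 • f x) (he : f 1 = 0) :
    ∀ x y z : G, f (x * y * z) = f (x * z * y) := by
  have hinv : ∀ g w u : G, f (w * (g⁻¹ * u * g)) = f (w * u) := by
    intro g
    have hg : g ∈ Subgroup.closure I := by rw [hgen]; trivial
    induction hg using Subgroup.closure_induction with
    | mem i hi =>
        intro w u
        have hii : i * i = 1 := by have := hI i hi; rwa [sq] at this
        have hiinv : i⁻¹ = i := by
          rw [inv_eq_iff_mul_eq_one]; exact hii
        rw [hiinv]
        have E1 := hJ (w * i) (u * i)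
        have E2 := hJ w i
        have E3 := hJ w u
        rw [hiinv] at E2
        have e2 : (2 : ℕ) • f (w * i) = 2 • f w := by
          rw [two_smul, two_smul, E2, two_smul]
        have hA : w * i * (u * i) = w * (i * u * i) := by group
        have hB : w * i * (u * i)⁻¹ = w * u⁻¹ := by
          rw [mul_inv_rev, hiinv]
          calc w * i * (i * u⁻¹) = w * (i * i) * u⁻¹ := by group
            _ = w * u⁻¹ := by rw [hii, mul_one]
        rw [hA, hB] at E1
        have key : f (w * (i * u * i)) + f (w * u⁻¹) = f (w * u) + f (w * u⁻¹) := by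
          rw [E1, e2, ← E3]
        exact add_right_cancel key
    | one => intro w u; simp
    | mul x y _ _ px py =>
        intro w u
        have h1 : w * ((x * y)⁻¹ * u * (x * y)) = w * (y⁻¹ * (x⁻¹ * u * x) * y) := by
          group
        rw [h1, py, px]
    | inv x _ px =>
        intro w u
        have h1 := px w (x * u * x⁻¹)
        have h2 : w * (x⁻¹ * (x * u * x⁻¹) * x) = w * u := by group
        rw [h2] at h1
        have h3 : w * (x⁻¹⁻¹ * u * x⁻¹) = w * (x * u * x⁻¹) := by group
        rw [h3, h1]
  intro x y z
  have h := hinv y (x * y) z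
  have : x * y * (y⁻¹ * z * y) = x * z * y := by group
  rw [this] at h
  exact h.symm
end

section
/- Let G be a group with a set I of involutions such that G = ⟨I⟩ and for every a,b ∈ I there exists t ∈ G with t² = ab (the SR₂ condition). Let H be an abelian group. If f : G → H satisfies (J1) with f(e) = 0, then f is a group homomorphism: f(xy) = f(x) + f(y) for all x,y ∈ G. -/
theorem stmt_11 {G H : Type*} [Group G] [AddCommGroup H] (I : Set G)
    (hI : ∀ i ∈ I, i ^ 2 = 1) (hgen : Subgroup.closure I = ⊤)
    (hSR : ∀ a ∈ I, ∀ b ∈ I, ∃ t : G, t ^ 2 = a * b) (f : G → H)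
    (hJ : ∀ x y : G, f (x * y) + f (x * y⁻¹) = 2 • f x) (he : f 1 = 0) :
    ∀ x y : G, f (x * y) = f x + f y := by
  -- Jensen without smul
  have hJ' : ∀ x y : G, f (x * y) + f (x * y⁻¹) = f x + f x := by
    intro x y
    rw [hJ x y, two_smul]
  have hImul : ∀ i ∈ I, i * i = 1 := by
    intro i hi
    have := hI i hi
    rwa [pow_two] at this
  have hIinv : ∀ i ∈ I, i⁻¹ = i := by
    intro i hi
    exact inv_eq_of_mul_eq_one_right (hImul i hi)
  -- f of inverse
  have finv : ∀ y : G, f y⁻¹ = -f y := by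
    intro y
    have h := hJ' 1 y
    simp only [one_mul, he, add_zero] at h
    exact eq_neg_of_add_eq_zero_right h
  -- conjugation identity: f (x y x) = 2 f x + f y
  have hC : ∀ x y : G, f (x * y * x) = f x + f x + f y := by
    intro x y
    have h := hJ' x (y * x)
    rw [mul_inv_rev, mul_inv_cancel_left, finv, ← mul_assoc] at h
    exact eq_add_of_add_neg_eq h
  -- left Jensen
  have hL : ∀ x y : G, f (y * x) + f (y⁻¹ * x) = f x + f x := by
    intro x y
    have h1 : f (y * x) = f x + f x + f (x⁻¹ * y) := by
      have := hC x (x⁻¹ * y)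
      rwa [mul_inv_cancel_left] at this
    have h2 : f (y⁻¹ * x) = -f (x⁻¹ * y) := by
      have : (x⁻¹ * y)⁻¹ = y⁻¹ * x := by group
      rw [← this, finv]
    rw [h1, h2]; abel
  -- square identity
  have hsq : ∀ t : G, f (t * t) = f t + f t := by
    intro t
    have h := hJ' t t
    rwa [mul_inv_cancel, he, add_zero] at h
  -- right multiplication by a square
  have hBsq : ∀ x t : G, f (x * t * t) = f (x * t) + f (x * t) - f x := by
    intro x t
    have h := hJ' (x * t) t
    rw [mul_inv_cancel_right] at h
    exact eq_sub_of_add_eq h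
  -- 2 f i = 0 for involutions
  have hfI : ∀ i ∈ I, f i + f i = 0 := by
    intro i hi
    have := hsq i
    rw [hImul i hi, he] at this
    exact this.symm
  -- f is additive on pairs of involutions
  have hII : ∀ a ∈ I, ∀ b ∈ I, f (a * b) = f a + f b := by
    intro a ha b hb
    obtain ⟨t, ht⟩ := hSR a ha b hb
    rw [pow_two] at ht
    have h1 : f (a * t * t) = f b := by
      rw [mul_assoc, ht, ← mul_assoc, hImul a ha, one_mul]
    have h2 : f (a * t) + f (a * t) = f t + f t := by
      have := hL t a
      rwa [hIinv a ha] at this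
    have h3 := hBsq a t
    rw [h1] at h3
    -- h3 : f b = f (a*t) + f (a*t) - f a = f t + f t - f a
    rw [h2] at h3
    rw [← ht, hsq t, h3]; abel
  -- every element is in the monoid closure of I
  have hmono : ∀ x : G, x ∈ Submonoid.closure I := by
    have hinvstep : ∀ x ∈ Submonoid.closure I, x⁻¹ ∈ Submonoid.closure I := by
      intro x hx
      induction hx using Submonoid.closure_induction with
      | mem i hi => rw [hIinv i hi]; exact Submonoid.subset_closure hi
      | one => simpa using Submonoid.one_mem _
      | mul a b _ _ ha hb => rw [mul_inv_rev]; exact Submonoid.mul_mem _ hb ha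
    intro x
    have hx : x ∈ Subgroup.closure I := by rw [hgen]; trivial
    induction hx using Subgroup.closure_induction with
    | mem i hi => exact Submonoid.subset_closure hi
    | one => exact Submonoid.one_mem _
    | mul a b _ _ ha hb => exact Submonoid.mul_mem _ ha hb
    | inv a _ ha => exact hinvstep a ha
  -- cocycle identity
  have coc : ∀ x y z : G, f (x * (y * z)) - f x - f (y * z) =
      (f (x * y) - f x - f y) + (f (x * y * z) - f (x * y) - f z)
        - (f (y * z) - f y - f z) := by
    intro x y z
    rw [mul_assoc x y z]; abel
  -- 2 D(x,y) = 0
  have hD2 : ∀ y x : G, (f (x * y) - f x - f y) + (f (x * y) - f x - f y) = 0 := by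
    intro y
    induction hmono y using Submonoid.closure_induction with
    | mem i hi =>
      intro x
      have h1 : f (x * i) + f (x * i) = f x + f x := by
        have := hJ' x i
        rwa [hIinv i hi] at this
      have h2 := hfI i hi
      calc (f (x * i) - f x - f i) + (f (x * i) - f x - f i)
          = (f (x * i) + f (x * i)) - (f x + f x) - (f i + f i) := by abel
        _ = 0 := by rw [h1, h2]; abel
    | one => intro x; simp [he]
    | mul y z _ _ hy hz =>
      intro x
      have h := coc x y z
      rw [h]
      have h1 := hy x
      have h2 := hz (x * y)
      have h3 := hz y
      calc ((f (x * y) - f x - f y) + (f (x * y * z) - f (x * y) - f z)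
              - (f (y * z) - f y - f z))
            + ((f (x * y) - f x - f y) + (f (x * y * z) - f (x * y) - f z)
              - (f (y * z) - f y - f z))
          = ((f (x * y) - f x - f y) + (f (x * y) - f x - f y))
            + ((f (x * y * z) - f (x * y) - f z) + (f (x * y * z) - f (x * y) - f z))
            - ((f (y * z) - f y - f z) + (f (y * z) - f y - f z)) := by abel
        _ = 0 := by rw [h1, h2, h3]; abel
  -- D(x, s) = 0 whenever s*s form: D vanishes on (x, t*t)
  have hDsq : ∀ x t : G, f (x * (t * t)) - f x - f (t * t) = 0 := by
    intro x t
    have e1 := hBsq x t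
    have e2 := hsq t
    have e3 := hD2 t x
    calc f (x * (t * t)) - f x - f (t * t)
        = f (x * t * t) - f x - f (t * t) := by rw [mul_assoc]
      _ = (f (x * t) + f (x * t) - f x) - f x - (f t + f t) := by rw [e1, e2]
      _ = (f (x * t) - f x - f t) + (f (x * t) - f x - f t) := by abel
      _ = 0 := e3
  -- D(x, j) = 0 for j ∈ I
  have hDI : ∀ x : G, ∀ j ∈ I, f (x * j) - f x - f j = 0 := by
    intro x
    induction hmono x using Submonoid.closure_induction_right with
    | one => intro j hj; simp [he]
    | mul_right x _ a ha hx =>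
      intro j hj
      obtain ⟨t, ht⟩ := hSR a ha j hj
      rw [pow_two] at ht
      have h1 : f (x * (a * j)) - f x - f (a * j) = 0 := by rw [← ht]; exact hDsq x t
      have h2 := coc x a j
      rw [h1] at h2
      have h3 := hx a ha
      have h4 : f (a * j) - f a - f j = 0 := by rw [hII a ha j hj]; abel
      rw [h3, h4] at h2
      -- h2 : 0 = 0 + (f (x*a*j) - f (x*a) - f j) - 0
      have := h2.symm
      rw [zero_add, sub_zero] at this
      exact this
  -- final induction
  have final : ∀ y x : G, f (x * y) - f x - f y = 0 := by
    intro y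
    induction hmono y using Submonoid.closure_induction with
    | mem j hj => intro x; exact hDI x j hj
    | one => intro x; simp [he]
    | mul y z _ _ hy hz =>
      intro x
      rw [coc x y z, hy x, hz (x * y), hz y]
      abel
  intro x y
  have h := final y x
  rw [sub_sub, sub_eq_zero] at h
  exact h
end

section
/- Let G be a group satisfying SR₂ with respect to a generating set I of involutions, and H an abelian group. If f : G → H satisfies (J1) with f(e) = 0, then f also satisfies (J2): f(xy) + f(x⁻¹y) = 2f(y) for all x,y ∈ G. -/
theorem stmt_12 {G H : Type*} [Group G] [AddCommGroup H] (I : Set G)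
    (hI : ∀ i ∈ I, i ^ 2 = 1) (hgen : Subgroup.closure I = ⊤)
    (hSR : ∀ a ∈ I, ∀ b ∈ I, ∃ t : G, t ^ 2 = a * b) (f : G → H)
    (hJ : ∀ x y : G, f (x * y) + f (x * y⁻¹) = 2 • f x) (he : f 1 = 0) :
    ∀ x y : G, f (x * y) + f (x⁻¹ * y) = 2 • f y := by
  -- f is odd
  have hodd : ∀ z : G, f z⁻¹ = - f z := by
    intro z
    have h := hJ 1 z
    simp [he] at h
    exact eq_neg_of_add_eq_zero_right h
  -- for i ∈ I, f (i * z) = f (z * i)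
  have hcomm : ∀ i ∈ I, ∀ z : G, f (i * z) = f (z * i) := by
    intro i hi z
    have hii : i * i = 1 := by rw [← sq]; exact hI i hi
    have hinv : i⁻¹ = i := inv_eq_of_mul_eq_one_right hii
    have h2 : (2 : ℕ) • f i = 0 := by
      have h := hJ i i
      rw [hii, mul_inv_cancel, he] at h
      simpa using h.symm
    have h1 := hJ i z
    rw [h2] at h1
    have h3 : f (i * z⁻¹) = - f (z * i) := by
      rw [← hodd]; congr 1; rw [mul_inv_rev, hinv]
    rw [h3] at h1
    have := add_eq_zero_iff_eq_neg.mp h1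
    rw [this, neg_neg]
  -- f is a class function
  have hconj : ∀ g z : G, f (g * z * g⁻¹) = f z := by
    intro g z
    have hg : g ∈ Subgroup.closure I := by rw [hgen]; trivial
    revert z
    induction hg using Subgroup.closure_induction with
    | mem i hi =>
      intro z
      rw [mul_assoc, hcomm i hi (z * i⁻¹), mul_assoc, inv_mul_cancel, mul_one]
    | one => intro z; simp
    | mul a b _ _ pa pb =>
      intro z
      have : a * b * z * (a * b)⁻¹ = a * (b * z * b⁻¹) * a⁻¹ := by group
      rw [this, pa, pb]
    | inv a _ pa =>
      intro z
      have h := pa (a⁻¹ * z * a)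
      have e : a * (a⁻¹ * z * a) * a⁻¹ = z := by group
      rw [e] at h
      rw [inv_inv, h]
  -- f (x*y) = f (y*x)
  have hsym : ∀ x y : G, f (x * y) = f (y * x) := by
    intro x y
    have := hconj y (x * y)
    rw [show y * (x * y) * y⁻¹ = y * x by group] at this
    exact this.symm
  intro x y
  rw [hsym x y, hsym x⁻¹ y]
  exact hJ y x
end

section
/- Let G satisfy SR₂ with respect to a generating set I of involutions, H abelian, and f : G → H satisfy (J1) with f(e) = 0. Then there exists u ∈ H with 2u = 0 such that f(i) = u for every involution i ∈ I; moreover for any word g = i₁⋯i_r with all i_k ∈ I, f(g) = 0 if r is even and f(g) = u if r is odd. -/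
theorem stmt_13 {G H : Type*} [Group G] [AddCommGroup H] (I : Set G)
    (hI : ∀ i ∈ I, i ^ 2 = 1) (hgen : Subgroup.closure I = ⊤)
    (hSR : ∀ a ∈ I, ∀ b ∈ I, ∃ t : G, t ^ 2 = a * b) (f : G → H)
    (hJ : ∀ x y : G, f (x * y) + f (x * y⁻¹) = 2 • f x) (he : f 1 = 0) :
    ∃ u : H, 2 • u = 0 ∧ (∀ i ∈ I, f i = u) ∧
      ∀ l : List G, (∀ i ∈ l, i ∈ I) →
        f l.prod = if Even l.length then 0 else u := by
  -- involutions are self-inverse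
  have hinv : ∀ i ∈ I, i⁻¹ = i := by
    intro i hi
    have h2 : i * i = 1 := by have := hI i hi; rwa [sq] at this
    exact inv_eq_of_mul_eq_one_right h2
  -- f is odd
  have hodd : ∀ y : G, f y⁻¹ = - f y := by
    intro y
    have h := hJ 1 y
    simp only [one_mul, he, smul_zero] at h
    rw [eq_neg_iff_add_eq_zero, add_comm]
    exact h
  -- f (x*y*x) = 2 • f x + f y
  have hxyx : ∀ x y : G, f (x * y * x) = 2 • f x + f y := by
    intro x y
    have h := hJ x (y * x)
    rw [mul_inv_rev, mul_inv_cancel_left, hodd, ← mul_assoc] at h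
    rw [← h]; abel
  -- 2 • f (z * a) = 2 • f z for a ∈ I
  have hta : ∀ a ∈ I, ∀ z : G, 2 • f (z * a) = 2 • f z := by
    intro a ha z
    have h := hJ z a
    rw [hinv a ha] at h
    rw [two_smul, ← h]
  -- 2 • f x = 0 for all x
  have htwo : ∀ x : G, 2 • f x = 0 := by
    have key : ∀ x : G, ∀ z : G, 2 • f (z * x) = 2 • f z := by
      intro x
      have hx : x ∈ Subgroup.closure I := by rw [hgen]; exact Subgroup.mem_top x
      induction hx using Subgroup.closure_induction with
      | mem a ha => exact hta a ha
      | one => intro z; rw [mul_one]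
      | mul x y hx hy ihx ihy =>
          intro z; rw [← mul_assoc, ihy, ihx]
      | inv x hx ihx =>
          intro z
          have := ihx (z * x⁻¹)
          rw [inv_mul_cancel_right] at this
          exact this.symm
    intro x
    have := key x 1
    rwa [one_mul, he, smul_zero] at this
  -- conjugation invariance
  have hconj : ∀ x y : G, f (x * y * x⁻¹) = f y := by
    intro x
    have hx : x ∈ Subgroup.closure I := by rw [hgen]; exact Subgroup.mem_top x
    induction hx using Subgroup.closure_induction with
    | mem a ha =>
        intro y
        rw [hinv a ha, hxyx, htwo, zero_add]
    | one => intro y; simp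
    | mul x z hx hz ihx ihz =>
        intro y
        have h1 : x * z * y * (x * z)⁻¹ = x * (z * y * z⁻¹) * x⁻¹ := by group
        rw [h1, ihx, ihz]
    | inv x hx ihx =>
        intro y
        have := ihx (x⁻¹ * y * x)
        rw [inv_inv]
        rw [show x * (x⁻¹ * y * x) * x⁻¹ = y by group] at this
        rw [← this]
  -- right multiplication by a product of two involutions preserves f
  have hpairR : ∀ a ∈ I, ∀ b ∈ I, ∀ z : G, f (z * (a * b)) = f z := by
    intro a ha b hb z
    obtain ⟨t, ht⟩ := hSR a ha b hb
    have h1 : z * (a * b) = t * (t⁻¹ * z * t) * t := by rw [← ht, sq]; group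
    rw [h1, hxyx, htwo, zero_add]
    have := hconj t⁻¹ z
    rwa [inv_inv] at this
  -- left version
  have hpairL : ∀ a ∈ I, ∀ b ∈ I, ∀ z : G, f (a * b * z) = f z := by
    intro a ha b hb z
    have h1 : a * b * z = (a * b) * (z * (a * b)) * (a * b)⁻¹ := by group
    rw [h1, hconj, hpairR a ha b hb]
  -- f is constant on I
  have hconst : ∀ a ∈ I, ∀ b ∈ I, f a = f b := by
    intro a ha b hb
    have hbb : b * b = 1 := by have := hI b hb; rwa [sq] at this
    have h1 := hpairL a ha b hb b
    rwa [mul_assoc, hbb, mul_one] at h1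
  -- choose u
  obtain ⟨u, hu2, hfu⟩ : ∃ u : H, 2 • u = 0 ∧ ∀ i ∈ I, f i = u := by
    by_cases hne : I.Nonempty
    · obtain ⟨i₀, hi₀⟩ := hne
      exact ⟨f i₀, htwo i₀, fun i hi => hconst i hi i₀ hi₀⟩
    · exact ⟨0, smul_zero 2, fun i hi => absurd ⟨i, hi⟩ hne⟩
  refine ⟨u, hu2, hfu, ?_⟩
  have key : ∀ n : ℕ, ∀ l : List G, l.length ≤ n → (∀ i ∈ l, i ∈ I) →
      f l.prod = if Even l.length then 0 else u := by
    intro n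
    induction n with
    | zero =>
        intro l hl _
        have hl0 : l = [] := List.length_eq_zero_iff.mp (Nat.le_zero.mp hl)
        subst hl0
        simpa using he
    | succ n ih =>
        intro l hl hmem
        match l with
        | [] => simpa using he
        | [a] =>
            simp only [List.prod_cons, List.prod_nil, mul_one, List.length_singleton]
            rw [if_neg (by decide)]
            exact hfu a (hmem a (by simp))
        | a :: b :: l' =>
            have ha : a ∈ I := hmem a (by simp)
            have hb : b ∈ I := hmem b (by simp)
            have hl' : l'.length ≤ n := by
              simp only [List.length_cons] at hl
              omega
            have hmem' : ∀ i ∈ l', i ∈ I := fun i hi => hmem i (by simp [hi])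
            have h1 : (a :: b :: l').prod = a * b * l'.prod := by
              simp [List.prod_cons, mul_assoc]
            rw [h1, hpairL a ha b hb, ih l' hl' hmem']
            have hpar : Even ((a :: b :: l').length) ↔ Even l'.length := by
              simp [Nat.even_add_one]
            by_cases hev : Even l'.length
            · rw [if_pos hev, if_pos (hpar.mpr hev)]
            · rw [if_neg hev, if_neg (fun h => hev (hpar.mp h))]
  intro l hmem
  exact key l.length l le_rfl hmem
end

section
/- Let n ≥ 2 and H an abelian group. If f : Sₙ → H satisfies f(στ) + f(στ⁻¹) = 2f(σ) for all σ,τ ∈ Sₙ and f(1) = 0, then there exists u ∈ H with 2u = 0 such that f(σ) = 0 for every even permutation σ and f(σ) = u for every odd permutation σ. -/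
theorem stmt_15 (n : ℕ) (hn : 2 ≤ n) {H : Type*} [AddCommGroup H]
    (f : Equiv.Perm (Fin n) → H)
    (hJ : ∀ σ τ : Equiv.Perm (Fin n), f (σ * τ) + f (σ * τ⁻¹) = 2 • f σ)
    (he : f 1 = 0) :
    ∃ u : H, 2 • u = 0 ∧
      (∀ σ : Equiv.Perm (Fin n), Equiv.Perm.sign σ = 1 → f σ = 0) ∧
      (∀ σ : Equiv.Perm (Fin n), Equiv.Perm.sign σ = -1 → f σ = u) := by
  classical
  -- f of inverse is the negative
  have hinv : ∀ τ : Equiv.Perm (Fin n), f τ⁻¹ = - f τ := by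
    intro τ
    have h := hJ 1 τ
    simp only [one_mul, he, smul_zero] at h
    exact (neg_eq_of_add_eq_zero_right h).symm
  -- f (x*y*x) = 2 • f x + f y
  have hxyx : ∀ x y : Equiv.Perm (Fin n), f (x * y * x) = 2 • f x + f y := by
    intro x y
    have h := hJ x (y * x)
    rw [mul_inv_rev] at h
    have e1 : x * (x⁻¹ * y⁻¹) = y⁻¹ := by group
    rw [e1, hinv, ← mul_assoc, ← sub_eq_add_neg, sub_eq_iff_eq_add] at h
    exact h
  -- squares
  have hsq : ∀ σ : Equiv.Perm (Fin n), f (σ * σ) = 2 • f σ := by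
    intro σ
    have h := hJ σ σ
    rw [mul_inv_cancel, he, add_zero] at h
    exact h
  -- transpositions have 2-torsion value
  have hswap2 : ∀ t : Equiv.Perm (Fin n), t.IsSwap → 2 • f t = 0 := by
    rintro t ⟨a, b, hab, rfl⟩
    have h := hsq (Equiv.swap a b)
    rw [Equiv.swap_mul_self, he] at h
    exact h.symm
  -- f is a class function
  have hconj : ∀ g y : Equiv.Perm (Fin n), f (g * y * g⁻¹) = f y := by
    have key : ∀ g ∈ Subgroup.closure {σ : Equiv.Perm (Fin n) | σ.IsSwap},
        ∀ y, f (g * y * g⁻¹) = f y := by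
      intro g hg
      induction hg using Subgroup.closure_induction with
      | mem t ht =>
        obtain ⟨a, b, hab, rfl⟩ := ht
        intro y
        rw [Equiv.swap_inv, hxyx, hswap2 _ ⟨a, b, hab, rfl⟩, zero_add]
      | one => intro y; simp
      | mul x z _ _ hx hz =>
        intro y
        have e : x * z * y * (x * z)⁻¹ = x * (z * y * z⁻¹) * x⁻¹ := by group
        rw [e, hx, hz]
      | inv x _ hx =>
        intro y
        have h := hx (x⁻¹ * y * x)
        have e : x * (x⁻¹ * y * x) * x⁻¹ = y := by group
        rw [e] at h
        rw [show x⁻¹ * y * x⁻¹⁻¹ = x⁻¹ * y * x by group, h]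
    intro g y
    exact key g (by rw [Equiv.Perm.closure_isSwap]; trivial) y
  -- doubled additivity
  have h2add : ∀ x y : Equiv.Perm (Fin n), 2 • f (x * y) = 2 • f x + 2 • f y := by
    intro x y
    have h := hJ (x * y) x⁻¹
    rw [inv_inv, mul_assoc x y x, ← mul_assoc, hxyx, hconj x y] at h
    rw [← h]; abel
  -- three-cycles vanish
  have h3cyc : ∀ c : Equiv.Perm (Fin n), c.IsThreeCycle → f c = 0 := by
    intro c hc
    have ho : orderOf c = 3 := hc.orderOf
    have hc3 : c * (c * c) = 1 := by
      have h := pow_orderOf_eq_one c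
      rw [ho, pow_succ, pow_succ, pow_one] at h
      rw [← mul_assoc]; exact h
    have h2 : 2 • f c = 0 := by
      have hconjc : IsConj c c⁻¹ :=
        Equiv.Perm.isConj_iff_cycleType_eq.2 (by rw [Equiv.Perm.cycleType_inv])
      obtain ⟨g, hg⟩ := isConj_iff.1 hconjc
      have hfc := hconj g c
      rw [hg, hinv] at hfc
      calc 2 • f c = f c + f c := two_smul _ _
        _ = f c + -f c := by rw [hfc]
        _ = 0 := by abel
    have h3 : f c + 2 • f c = 0 := by
      have h := hJ c (c * c)
      rw [show c * (c * c) = 1 from hc3, he] at h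
      have e : c * (c * c)⁻¹ = c⁻¹ := by group
      rw [e, hinv, zero_add] at h
      rw [← h]; abel
    calc f c = f c + 2 • f c - 2 • f c := by abel
      _ = 0 := by rw [h3, h2]; abel
  -- multiplying by a three-cycle does not change f
  have hmulc : ∀ (σ c : Equiv.Perm (Fin n)), c.IsThreeCycle → f (σ * c) = f σ := by
    intro σ c hc
    have ho : orderOf c = 3 := hc.orderOf
    have hc3 : c * (c * c) = 1 := by
      have h := pow_orderOf_eq_one c
      rw [ho, pow_succ, pow_succ, pow_one] at h
      rw [← mul_assoc]; exact h
    have hcinv : c⁻¹ = c * c := by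
      symm; rw [eq_inv_iff_mul_eq_one, mul_assoc]; exact hc3
    -- e1 : f (σ*c) + 2 • f (σ*c) = 2 • f σ + f σ
    have hstep : f (σ * c * c) + f σ = 2 • f (σ * c) := by
      have h := hJ (σ * c) c
      rw [show σ * c * c⁻¹ = σ by group] at h
      exact h
    have e1 : f (σ * c) + 2 • f (σ * c) = 2 • f σ + f σ := by
      have h := hJ σ c
      rw [hcinv, ← mul_assoc] at h
      have hs : f (σ * c * c) = 2 • f (σ * c) - f σ := by rw [← hstep]; abel
      rw [hs] at h
      rw [← h]; abel
    have e2 : 2 • f (σ * c) = 2 • f σ := by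
      rw [h2add, h3cyc c hc]; abel
    calc f (σ * c) = f (σ * c) + 2 • f (σ * c) - 2 • f (σ * c) := by abel
      _ = 2 • f σ + f σ - 2 • f σ := by rw [e1, e2]
      _ = f σ := by abel
  -- multiplying on the right by an even permutation does not change f
  have heven : ∀ g ∈ alternatingGroup (Fin n), ∀ σ, f (σ * g) = f σ := by
    intro g hg
    rw [← Equiv.Perm.closure_three_cycles_eq_alternating] at hg
    induction hg using Subgroup.closure_induction with
    | mem c hc => intro σ; exact hmulc σ c hc
    | one => intro σ; rw [mul_one]
    | mul x z _ _ hx hz => intro σ; rw [← mul_assoc, hz, hx]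
    | inv x _ hx =>
      intro σ
      have h := hx (σ * x⁻¹)
      rw [mul_assoc, inv_mul_cancel, mul_one] at h
      exact h.symm
  -- the distinguished transposition
  have h01 : (⟨0, by omega⟩ : Fin n) ≠ ⟨1, by omega⟩ := by
    intro h
    exact absurd (congrArg Fin.val h) (by simp)
  set t : Equiv.Perm (Fin n) := Equiv.swap ⟨0, by omega⟩ ⟨1, by omega⟩ with ht
  have hts : t.IsSwap := ⟨_, _, h01, rfl⟩
  have htsign : Equiv.Perm.sign t = -1 := Equiv.Perm.sign_swap h01
  refine ⟨f t, hswap2 t hts, ?_, ?_⟩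
  · intro σ hσ
    have h := heven σ (Equiv.Perm.mem_alternatingGroup.2 hσ) 1
    rw [one_mul, he] at h
    exact h
  · intro σ hσ
    have hmem : t⁻¹ * σ ∈ alternatingGroup (Fin n) := by
      rw [Equiv.Perm.mem_alternatingGroup]
      rw [map_mul, map_inv, htsign, hσ]
      norm_num
    have h := heven (t⁻¹ * σ) hmem t
    rw [← mul_assoc, mul_inv_cancel, one_mul] at h
    exact h
end

section
/- Let m = 2k be even, D_m the dihedral group of order 2m, H an abelian group, and u, c ∈ H with 2u = 0 and 2c = 0. Define f : D_m → H by f(r^j) = 0 if j is even, f(r^j) = u if j is odd, and f(sr^j) = c for all j. Then f satisfies the Jensen equation f(xy) + f(xy⁻¹) = 2f(x) for all x, y ∈ D_m; moreover if u ≠ 0 then f is not a group homomorphism. -/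
theorem stmt_18 (k : ℕ) (hk : 0 < k) {H : Type*} [AddCommGroup H]
    (u c : H) (hu : 2 • u = 0) (hc : 2 • c = 0)
    (f : DihedralGroup (2 * k) → H)
    (hfr : ∀ j : ZMod (2 * k),
      f (DihedralGroup.r j) = if Even j.val then 0 else u)
    (hfs : ∀ j : ZMod (2 * k), f (DihedralGroup.sr j) = c) :
    (∀ x y : DihedralGroup (2 * k), f (x * y) + f (x * y⁻¹) = 2 • f x) ∧
    (u ≠ 0 → ¬ ∀ x y : DihedralGroup (2 * k), f (x * y) = f x + f y) := by
  have h2 : (2 : ℕ) ∣ 2 * k := ⟨k, rfl⟩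
  haveI : NeZero (2 * k) := ⟨by positivity⟩
  set φ : ZMod (2 * k) →+* ZMod 2 := ZMod.castHom h2 (ZMod 2) with hφdef
  have hparity : ∀ j : ZMod (2 * k), Even j.val ↔ φ j = 0 := by
    intro j
    rw [hφdef, ZMod.castHom_apply, ← ZMod.natCast_val,
      ZMod.natCast_eq_zero_iff]
    exact even_iff_two_dvd
  have hfr' : ∀ j : ZMod (2 * k),
      f (DihedralGroup.r j) = if φ j = 0 then 0 else u := by
    intro j
    rw [hfr]
    by_cases h : Even j.val
    · rw [if_pos h, if_pos ((hparity j).mp h)]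
    · rw [if_neg h, if_neg (fun h0 => h ((hparity j).mpr h0))]
  have hall : ∀ z, 2 • f z = 0 := by
    intro z
    rcases z with j | j
    · rw [hfr]; split
      · simp
      · exact hu
    · rw [hfs]; exact hc
  have hneg : ∀ a : ZMod 2, -a = a := by decide
  constructor
  · intro x y
    have heq : f (x * y) = f (x * y⁻¹) := by
      rcases x with i | i <;> rcases y with j | j
      · show f (DihedralGroup.r (i + j)) = f (DihedralGroup.r (i + -j))
        rw [hfr', hfr']
        have : φ (i + j) = φ (i + -j) := by
          rw [map_add, map_add, map_neg, hneg]
        rw [this]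
      · show f (DihedralGroup.sr (j - i)) = f (DihedralGroup.sr (j - i))
        rfl
      · show f (DihedralGroup.sr (i + j)) = f (DihedralGroup.sr (i + -j))
        rw [hfs, hfs]
      · rfl
    rw [heq, ← two_smul ℕ, hall, hall]
  · intro hu0 hhom
    haveI : Fact (1 < 2 * k) := ⟨by omega⟩
    have h1 : ((1 : ZMod (2 * k)).val) = 1 := ZMod.val_one _
    have := hhom (DihedralGroup.sr 0) (DihedralGroup.r 1)
    rw [show DihedralGroup.sr 0 * DihedralGroup.r 1 = DihedralGroup.sr ((0 : ZMod (2*k)) + 1) from rfl,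
      hfs, hfs, hfr, h1] at this
    simp only [Nat.not_even_one, if_neg] at this
    exact hu0 (left_eq_add.mp this)
end
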